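/- arXiv:1609.04975 — 5 statements merged into one kernel-verified Lean document; each statement's English description precedes it below -/
import Mathlib

section
/- Every permutation of a finite set whose support has at least 3 elements has a power which also has support of size at least 3 and whose order is prime. -/
/-- A nontrivial permutation whose order is not 2 has support of size at least 3. -/
lemma aux_three_le_card {n : ℕ} (σ : Equiv.Perm (Fin n)) (h1 : σ ≠ 1)
    (h2 : orderOf σ ≠ 2) : 3 ≤ σ.support.card := by
  rcases Nat.lt_or_ge σ.support.card 3 with hlt | hge
  · interval_cases hc : σ.support.card
    · exact absurd (Equiv.Perm.support_eq_empty_iff.mp (Finset.card_eq_zero.mp hc)) h1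
    · exact absurd hc σ.card_support_ne_one
    · obtain ⟨x, y, hxy, rfl⟩ := Equiv.Perm.card_support_eq_two.mp hc
      exact (h2 (orderOf_eq_prime (by rw [pow_two, Equiv.swap_mul_self]) h1)).elim
  · exact hge

/-- Every permutation of a finite set whose support has at least 3 elements has a power
which also has support of size at least 3 and whose order is prime. -/
theorem stmt_0 (n : ℕ) (π : Equiv.Perm (Fin n)) (h : 3 ≤ π.support.card) :
    ∃ k : ℕ, 3 ≤ ((π ^ k).support.card) ∧ (orderOf (π ^ k)).Prime := by
  classical
  set N := orderOf π with hN
  have hπ1 : π ≠ 1 := by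
    intro hp
    rw [hp, Equiv.Perm.support_one] at h
    simp at h
  have hNpos : 0 < N := orderOf_pos π
  by_cases hodd : ∃ p : ℕ, p.Prime ∧ p ∣ N ∧ p ≠ 2
  · obtain ⟨p, hp, hpd, hp2⟩ := hodd
    have hord : orderOf (π ^ (N / p)) = p := by
      rw [orderOf_pow, ← hN, Nat.gcd_eq_right (Nat.div_dvd_of_dvd hpd),
        Nat.div_div_self hpd hNpos.ne']
    refine ⟨N / p, ?_, by rw [hord]; exact hp⟩
    refine aux_three_le_card _ ?_ (by rw [hord]; exact hp2)
    intro h1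
    rw [h1, orderOf_one] at hord
    exact hp.ne_one hord.symm
  · push_neg at hodd
    -- N is a power of 2
    have hN2 : N = 2 ^ (N.factorization 2) := by
      have h1 : ordCompl[2] N = 1 := by
        rw [Nat.eq_one_iff_not_exists_prime_dvd]
        intro p hp hpd
        have hpN : p ∣ N := hpd.trans (Nat.ordCompl_dvd N 2)
        have hp2 : p = 2 := by
          by_contra hne
          exact hne (hodd p hp hpN)
        subst hp2
        exact (Nat.not_dvd_ordCompl hp hNpos.ne') hpd
      conv_lhs => rw [← Nat.ordProj_mul_ordCompl_eq_self N 2]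
      rw [h1, mul_one]
    set e := N.factorization 2 with he
    rcases Nat.lt_or_ge e 2 with he2 | he2
    · -- e = 0 or 1 : orderOf π = 1 (impossible) or 2
      interval_cases e
      · simp only [pow_zero] at hN2
        exact absurd (orderOf_eq_one_iff.mp hN2) hπ1
      · refine ⟨1, by simpa using h, ?_⟩
        rw [pow_one, ← hN, hN2, pow_one]
        exact Nat.prime_two
    · -- e ≥ 2
      set k := 2 ^ (e - 1) with hk
      have hkdvd : k ∣ N := by rw [hN2, hk]; exact pow_dvd_pow 2 (Nat.sub_le e 1)
      have hord : orderOf (π ^ k) = 2 := by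
        rw [orderOf_pow, ← hN, Nat.gcd_eq_right hkdvd, hN2, hk,
          Nat.pow_div (Nat.sub_le e 1) (by norm_num)]
        have h1 : e - (e - 1) = 1 := by omega
        rw [h1, pow_one]
      refine ⟨k, ?_, hord ▸ Nat.prime_two⟩
      -- pick a point moved by π ^ k
      have hne1 : π ^ k ≠ 1 := by
        intro h1
        rw [h1, orderOf_one] at hord
        exact absurd hord (by norm_num)
      obtain ⟨a, ha⟩ : ∃ a, (π ^ k) a ≠ a := by
        by_contra hc
        push_neg at hc
        exact hne1 (Equiv.ext hc)
      have haπ : π a ≠ a :=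
        Equiv.Perm.mem_support.mp
          (Equiv.Perm.support_pow_le π k (Equiv.Perm.mem_support.mpr ha))
      set c := π.cycleOf a with hc
      have hcyc : c.IsCycle := Equiv.Perm.isCycle_cycleOf π haπ
      -- orderOf c = 2 ^ e
      have hcd : orderOf c ∣ 2 ^ e := hN2 ▸ Equiv.Perm.orderOf_cycleOf_dvd_orderOf π a
      have hcnd : ¬ orderOf c ∣ k := by
        intro hd
        have : (c ^ k) a = a := by
          obtain ⟨m, hm⟩ := hd
          rw [hm, pow_mul, pow_orderOf_eq_one, one_pow, Equiv.Perm.one_apply]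
        rw [hc, Equiv.Perm.cycleOf_pow_apply_self] at this
        exact ha this
      have hcord : orderOf c = 2 ^ e := by
        obtain ⟨j, hj, hji⟩ := (Nat.dvd_prime_pow Nat.prime_two).mp hcd
        rw [hji]
        rw [hji, hk] at hcnd
        have : ¬ j ≤ e - 1 := fun hje => hcnd (pow_dvd_pow 2 hje)
        have : j = e := by omega
        rw [this]
      -- support of c is contained in support of π ^ k
      have hsub : c.support ⊆ (π ^ k).support := by
        intro y hy
        rw [hc, Equiv.Perm.mem_support_cycleOf_iff] at hy
        obtain ⟨⟨i, hi⟩, _⟩ := hy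
        rw [Equiv.Perm.mem_support]
        intro hy'
        apply ha
        have hcomm : π ^ (k : ℕ) * π ^ (i : ℤ) = π ^ (i : ℤ) * π ^ (k : ℕ) := by
          rw [← zpow_natCast π k, ← zpow_add, ← zpow_add, add_comm]
        have : (π ^ k) ((π ^ i) a) = (π ^ i) a := hi ▸ hy'
        rw [← Equiv.Perm.mul_apply, hcomm, Equiv.Perm.mul_apply] at this
        exact (Equiv.injective (π ^ i)) this
      calc 3 ≤ 2 ^ e := by
              calc (3:ℕ) ≤ 2 ^ 2 := by norm_num
              _ ≤ 2 ^ e := Nat.pow_le_pow_right (by norm_num) he2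
        _ = c.support.card := by rw [← hcord, hcyc.orderOf]
        _ ≤ (π ^ k).support.card := Finset.card_le_card hsub
end

section
/- Let e, f be distinct elements of [n] and 2 ≤ r ≤ n-2. The number of stable sets in J(n,r) invariant under the transposition (e f) equals the product of the number of stable sets in the subgraph of J(n,r) induced by r-sets avoiding both e and f, and the number of stable sets in the subgraph induced by r-sets containing both e and f. -/
open scoped symmDiff

/-- The vertex type of the Johnson graph `J(n,r)`: the `r`-element subsets of `[n]`. -/
abbrev JVert (n r : ℕ) := {X : Finset (Fin n) // X.card = r}

/-- The Johnson graph `J(n,r)`: vertices are the `r`-subsets of `[n]`,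
with `X` and `Y` adjacent iff `|X △ Y| = 2`. -/
def JohnsonGraph (n r : ℕ) : SimpleGraph (JVert n r) where
  Adj X Y := ((X : Finset (Fin n)) ∆ (Y : Finset (Fin n))).card = 2
  symm := by constructor; intro X Y h; rwa [symmDiff_comm]
  loopless := by constructor; intro X h; simp [symmDiff_self] at h

/-- A stable (independent) set of vertices in a graph. -/
def IsStable {V : Type*} (G : SimpleGraph V) (S : Set V) : Prop :=
  ∀ X ∈ S, ∀ Y ∈ S, ¬ G.Adj X Y

/-- The pointwise action of a permutation of `[n]` on the vertices of `J(n,r)`. -/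
def permVert {n r : ℕ} (π : Equiv.Perm (Fin n)) (X : JVert n r) : JVert n r :=
  ⟨(X : Finset (Fin n)).image π, by
    rw [Finset.card_image_of_injective _ π.injective, X.2]⟩

/-!
A transposition `(e f)` moves exactly the `r`-sets `X` containing just one of `e`, `f`, and
then `X △ (e f)X = {e, f}`, so `X` and its image are adjacent. Hence an invariant stable set
consists of sets containing both or neither of `e`, `f`, and conversely every such stable set
is invariant. There are no edges between the two kinds: if `|X| = |Y|` then
`|X △ Y| = 2 |Y \ X|`, and `e, f ∈ Y \ X` forces `|X △ Y| ≥ 4`. So an invariant stable set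
splits uniquely as the union of a stable set of each kind.
-/

open Finset

namespace Finset

variable {α : Type*} [DecidableEq α] {e f : α} {X Y : Finset α}

lemma image_swap_eq_self (h : e ∈ X ↔ f ∈ X) : X.image (Equiv.swap e f) = X := by
  ext a
  simp only [mem_image, Equiv.swap_apply_def]
  grind

lemma image_swap_symmDiff_self (hef : e ≠ f) (h : ¬(e ∈ X ↔ f ∈ X)) :
    X.image (Equiv.swap e f) ∆ X = {e, f} := by
  ext a
  simp only [mem_symmDiff, mem_image, Equiv.swap_apply_def, mem_insert, mem_singleton]
  grind

lemma card_symmDiff_eq_two_mul_card_sdiff (h : #X = #Y) : #(X ∆ Y) = 2 * #(Y \ X) := by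
  rw [symmDiff_def, sup_eq_union, card_union_of_disjoint disjoint_sdiff_sdiff,
    card_sdiff_comm h]
  ring

lemma injOn_union_of_forall_of_forall_not (p : α → Prop) [DecidablePred p]
    {S T : Set (Finset α)} (hS : ∀ A ∈ S, ∀ x ∈ A, p x) (hT : ∀ B ∈ T, ∀ x ∈ B, ¬ p x) :
    Set.InjOn (fun q : Finset α × Finset α => q.1 ∪ q.2) (S ×ˢ T) := by
  have filter_union_eq : ∀ q ∈ S ×ˢ T,
      (q.1 ∪ q.2).filter p = q.1 ∧ (q.1 ∪ q.2).filter (¬ p ·) = q.2 := by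
    rintro ⟨A, B⟩ ⟨hA, hB⟩
    have hAp : A.filter p = A := filter_true_of_mem (hS A hA)
    have hAnp : A.filter (¬ p ·) = ∅ := filter_false_of_mem fun x hx hnx => hnx (hS A hA x hx)
    have hBp : B.filter p = ∅ := filter_false_of_mem (hT B hB)
    have hBnp : B.filter (¬ p ·) = B := filter_true_of_mem (hT B hB)
    rw [filter_union, filter_union, hAp, hAnp, hBp, hBnp, union_empty, empty_union]
    exact ⟨rfl, rfl⟩
  intro q hq q' hq' h
  obtain ⟨h₁, h₂⟩ := filter_union_eq q hq
  obtain ⟨h₁', h₂'⟩ := filter_union_eq q' hq'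
  simp only at h
  exact Prod.ext (h₁.symm.trans (h ▸ h₁')) (h₂.symm.trans (h ▸ h₂'))

end Finset

lemma IsStable.mono {V : Type*} {G : SimpleGraph V} {S T : Set V} (hS : IsStable G S)
    (hTS : T ⊆ S) : IsStable G T :=
  fun X hX Y hY => hS X (hTS hX) Y (hTS hY)

lemma IsStable.union {V : Type*} {G : SimpleGraph V} {S T : Set V} (hS : IsStable G S)
    (hT : IsStable G T) (hST : ∀ X ∈ S, ∀ Y ∈ T, ¬ G.Adj X Y) : IsStable G (S ∪ T) := by
  rintro X (hX | hX) Y (hY | hY)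
  · exact hS X hX Y hY
  · exact hST X hX Y hY
  · exact fun h => hST Y hY X hX h.symm
  · exact hT X hX Y hY

def stableSetsWithin {V : Type*} (G : SimpleGraph V) (p : V → Prop) : Set (Finset V) :=
  {I | IsStable G ↑I ∧ ∀ X ∈ I, p X}

namespace JohnsonGraph

variable {n r : ℕ} {e f : Fin n}

lemma permVert_swap_eq_self {X : JVert n r} (h : e ∈ X.1 ↔ f ∈ X.1) :
    permVert (Equiv.swap e f) X = X :=
  Subtype.ext (image_swap_eq_self h)

lemma adj_permVert_swap (hef : e ≠ f) {X : JVert n r} (h : ¬(e ∈ X.1 ↔ f ∈ X.1)) :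
    (JohnsonGraph n r).Adj (permVert (Equiv.swap e f) X) X := by
  change #(X.1.image (Equiv.swap e f) ∆ X.1) = 2
  rw [image_swap_symmDiff_self hef h, card_pair hef]

lemma not_adj_of_mem_sdiff (hef : e ≠ f) {X Y : JVert n r} (he : e ∈ Y.1 \ X.1)
    (hf : f ∈ Y.1 \ X.1) : ¬ (JohnsonGraph n r).Adj X Y := by
  intro hadj
  have hcard : #(X.1 ∆ Y.1) = 2 * #(Y.1 \ X.1) :=
    card_symmDiff_eq_two_mul_card_sdiff (X.2.trans Y.2.symm)
  have hpair : 2 ≤ #(Y.1 \ X.1) := by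
    simpa [card_pair hef] using card_le_card (insert_subset he (singleton_subset_iff.2 hf))
  change #(X.1 ∆ Y.1) = 2 at hadj
  omega

lemma mem_iff_mem_of_isStable_of_forall_permVert_swap_mem (hef : e ≠ f)
    {I : Finset (JVert n r)} (hI : IsStable (JohnsonGraph n r) ↑I)
    (hinv : ∀ X ∈ I, permVert (Equiv.swap e f) X ∈ I) {X : JVert n r} (hX : X ∈ I) :
    e ∈ X.1 ↔ f ∈ X.1 := by
  by_contra h
  exact hI _ (hinv X hX) X hX (adj_permVert_swap hef h)

theorem swapInvariant_stableSets_eq_image_union (hef : e ≠ f) :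
    {I : Finset (JVert n r) | IsStable (JohnsonGraph n r) ↑I ∧
        ∀ X ∈ I, permVert (Equiv.swap e f) X ∈ I} =
      (fun q => q.1 ∪ q.2) ''
        (stableSetsWithin (JohnsonGraph n r) (fun X => e ∉ X.1 ∧ f ∉ X.1) ×ˢ
          stableSetsWithin (JohnsonGraph n r) (fun X => e ∈ X.1 ∧ f ∈ X.1)) := by
  ext I
  constructor
  · rintro ⟨hI, hinv⟩
    have hiff {X} (hX : X ∈ I) :=
      mem_iff_mem_of_isStable_of_forall_permVert_swap_mem hef hI hinv hX
    refine ⟨(I.filter (e ∉ ·.1), I.filter (e ∈ ·.1)), ⟨⟨?_, ?_⟩, ⟨?_, ?_⟩⟩, ?_⟩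
    · exact hI.mono (coe_subset.2 (filter_subset _ I))
    · intro X hX
      obtain ⟨hXI, heX⟩ := mem_filter.1 hX
      exact ⟨heX, fun hfX => heX ((hiff hXI).2 hfX)⟩
    · exact hI.mono (coe_subset.2 (filter_subset _ I))
    · intro X hX
      obtain ⟨hXI, heX⟩ := mem_filter.1 hX
      exact ⟨heX, (hiff hXI).1 heX⟩
    · exact (union_comm _ _).trans (filter_union_filter_not_eq _ I)
  · rintro ⟨⟨A, B⟩, ⟨⟨hA, hAp⟩, ⟨hB, hBp⟩⟩, rfl⟩
    refine ⟨?_, ?_⟩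
    · rw [coe_union]
      refine hA.union hB fun X hX Y hY => not_adj_of_mem_sdiff hef ?_ ?_
      · exact mem_sdiff.2 ⟨(hBp Y hY).1, (hAp X hX).1⟩
      · exact mem_sdiff.2 ⟨(hBp Y hY).2, (hAp X hX).2⟩
    · intro X hX
      rcases mem_union.1 hX with hXA | hXB
      · rwa [permVert_swap_eq_self (iff_of_false (hAp X hXA).1 (hAp X hXA).2)]
      · rwa [permVert_swap_eq_self (iff_of_true (hBp X hXB).1 (hBp X hXB).2)]

end JohnsonGraph

theorem stmt_7_general (n r : ℕ) (e f : Fin n) (hef : e ≠ f) :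
    {I : Finset (JVert n r) | IsStable (JohnsonGraph n r) ↑I ∧
        ∀ X ∈ I, permVert (Equiv.swap e f) X ∈ I}.ncard =
      {I : Finset (JVert n r) | IsStable (JohnsonGraph n r) ↑I ∧
          ∀ X ∈ I, e ∉ (X : Finset (Fin n)) ∧ f ∉ (X : Finset (Fin n))}.ncard *
      {I : Finset (JVert n r) | IsStable (JohnsonGraph n r) ↑I ∧
          ∀ X ∈ I, e ∈ (X : Finset (Fin n)) ∧ f ∈ (X : Finset (Fin n))}.ncard := by
  have hinj := injOn_union_of_forall_of_forall_not (fun X : JVert n r => e ∉ X.1 ∧ f ∉ X.1)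
    (S := stableSetsWithin (JohnsonGraph n r) (fun X => e ∉ X.1 ∧ f ∉ X.1))
    (T := stableSetsWithin (JohnsonGraph n r) (fun X => e ∈ X.1 ∧ f ∈ X.1))
    (fun A hA => hA.2) (fun B hB X hX hX' => hX'.1 (hB.2 X hX).1)
  rw [JohnsonGraph.swapInvariant_stableSets_eq_image_union hef, hinj.ncard_image,
    Set.ncard_prod]
  rfl

/-- For a transposition `(e f)` and `2 ≤ r ≤ n-2`, the number of `(e f)`-invariant stable
sets in `J(n,r)` equals the number of stable sets among the vertices avoiding both `e` and
`f` times the number of stable sets among the vertices containing both `e` and `f`. -/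
theorem stmt_7 (n r : ℕ) (e f : Fin n) (hef : e ≠ f) (h2 : 2 ≤ r) (hrn : r ≤ n - 2) :
    {I : Finset (JVert n r) | IsStable (JohnsonGraph n r) ↑I ∧
        ∀ X ∈ I, permVert (Equiv.swap e f) X ∈ I}.ncard =
      {I : Finset (JVert n r) | IsStable (JohnsonGraph n r) ↑I ∧
          ∀ X ∈ I, e ∉ (X : Finset (Fin n)) ∧ f ∉ (X : Finset (Fin n))}.ncard *
      {I : Finset (JVert n r) | IsStable (JohnsonGraph n r) ↑I ∧
          ∀ X ∈ I, e ∈ (X : Finset (Fin n)) ∧ f ∈ (X : Finset (Fin n))}.ncard :=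
  stmt_7_general n r e f hef
end

section
/- For 1 ≤ m ≤ n-1, the central binomial coefficient satisfies C(n-m, ⌊(n-m)/2⌋) ≤ (n/(n-1)) · √(n/(n-m)) · 2^{-m} · C(n, ⌊n/2⌋). -/
open Real



-- even doubling: C(2a+2, a+1) = 2 C(2a+1, a)
lemma lemE (a : ℕ) : (2*a+2).choose (a+1) = 2 * (2*a+1).choose a := by
  have h : (2*a+2).choose (a+1) = (2*a+1).choose a + (2*a+1).choose (a+1) :=
    Nat.choose_succ_succ (2*a+1) a
  have h2 := Nat.choose_symm_half a
  omega

-- odd ratio: (a+1) C(2a+1, a) = (2a+1) C(2a, a)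
lemma lemO (a : ℕ) : (a+1) * (2*a+1).choose a = (2*a+1) * (2*a).choose a := by
  have h : (2*a+1) * (2*a).choose a = (2*a+1).choose (a+1) * (a+1) :=
    Nat.add_one_mul_choose_eq (2*a) a
  have h2 := Nat.choose_symm_half a
  rw [h, h2]; ring

-- one-step: 2(k+1) C(k, k/2) ≤ (k+2) C(k+1, (k+1)/2)
lemma nat1 (k : ℕ) : 2*(k+1) * k.choose (k/2) ≤ (k+2) * (k+1).choose ((k+1)/2) := by
  rcases Nat.even_or_odd k with ⟨a, ha⟩ | ⟨a, ha⟩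
  · subst ha
    have hd1 : (a+a)/2 = a := by omega
    have hd2 : (a+a+1)/2 = a := by omega
    rw [hd1, hd2, show a+a = 2*a from by ring]
    have hO := lemO a
    nlinarith [hO]
  · subst ha
    have hd1 : (2*a+1)/2 = a := by omega
    have hd2 : (2*a+1+1)/2 = a+1 := by omega
    rw [hd1, hd2]
    have hE := lemE a
    have h3 : 2*a+1+1 = 2*a+2 := by ring
    rw [h3, hE]
    nlinarith [Nat.zero_le ((2*a+1).choose a)]

-- two-step: 4(k+1) C(k, k/2) ≤ (k+2) C(k+2, (k+2)/2)
lemma nat2 (k : ℕ) : 4*(k+1) * k.choose (k/2) ≤ (k+2) * (k+2).choose ((k+2)/2) := by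
  rcases Nat.even_or_odd k with ⟨a, ha⟩ | ⟨a, ha⟩
  · subst ha
    have hd1 : (a+a)/2 = a := by omega
    have hd2 : (a+a+2)/2 = a+1 := by omega
    rw [hd1, hd2, show a+a = 2*a from by ring]
    have hE := lemE a
    have hO := lemO a
    rw [show 2*a+2 = 2*a+2 from rfl, hE]
    nlinarith [hO]
  · subst ha
    have hd1 : (2*a+1)/2 = a := by omega
    have hd2 : (2*a+1+2)/2 = a+1 := by omega
    rw [hd1, hd2]
    have hE := lemE a
    have hO := lemO (a+1)
    have h5 : 2*(a+1)+1 = 2*a+3 := by ring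
    have h6 : 2*(a+1) = 2*a+2 := by ring
    rw [h5, h6, hE] at hO
    have h7 : 2*a+1+2 = 2*a+3 := by ring
    rw [h7]
    apply Nat.le_of_mul_le_mul_left _ (show 0 < a+2 by omega)
    nlinarith [hO, Nat.zero_le ((2*a+1).choose a)]



-- helper: A√x ≤ B√y from A²x ≤ B²y
lemma sqrt_helper {A B x y : ℝ} (hA : 0 ≤ A) (hB : 0 ≤ B)
    (h : A^2 * x ≤ B^2 * y) : A * Real.sqrt x ≤ B * Real.sqrt y := by
  have h1 : A * Real.sqrt x = Real.sqrt (A^2 * x) := by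
    rw [Real.sqrt_mul (by positivity), Real.sqrt_sq hA]
  have h2 : B * Real.sqrt y = Real.sqrt (B^2 * y) := by
    rw [Real.sqrt_mul (by positivity), Real.sqrt_sq hB]
  rw [h1, h2]
  exact Real.sqrt_le_sqrt h

-- real two-step: 4 C(k) √k ≤ C(k+2) √(k+2)
lemma R2 (k : ℕ) : (4:ℝ) * (k.choose (k/2) : ℝ) * Real.sqrt (k : ℝ) ≤
    ((k+2).choose ((k+2)/2) : ℝ) * Real.sqrt ((k+2 : ℕ) : ℝ) := by
  have h : (4:ℝ)*((k:ℝ)+1) * (k.choose (k/2) : ℝ) ≤ ((k:ℝ)+2) * ((k+2).choose ((k+2)/2) : ℝ) := by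
    have := nat2 k
    exact_mod_cast this
  set A : ℝ := 4 * (k.choose (k/2) : ℝ) with hAdef
  set B : ℝ := ((k+2).choose ((k+2)/2) : ℝ) with hBdef
  have hA : 0 ≤ A := by positivity
  have hB : 0 ≤ B := by positivity
  have hk0 : (0:ℝ) ≤ (k:ℝ) := Nat.cast_nonneg k
  apply sqrt_helper hA hB
  have h' : ((k:ℝ)+1) * A ≤ ((k:ℝ)+2) * B := by rw [hAdef]; nlinarith [h]
  have hsq : (((k:ℝ)+1) * A)^2 ≤ (((k:ℝ)+2) * B)^2 :=
    pow_le_pow_left₀ (by positivity) h' 2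
  have key : ((k:ℝ)+2) * (k:ℝ) ≤ ((k:ℝ)+1)^2 := by nlinarith
  push_cast
  nlinarith [hsq, sq_nonneg B, hk0, sq_nonneg A]

-- iterate
lemma Riter (j k : ℕ) : (4:ℝ)^j * (k.choose (k/2) : ℝ) * Real.sqrt (k : ℝ) ≤
    ((k+2*j).choose ((k+2*j)/2) : ℝ) * Real.sqrt ((k+2*j : ℕ) : ℝ) := by
  induction j with
  | zero => simp
  | succ j ih =>
    have h2 := R2 (k+2*j)
    have e : k+2*(j+1) = (k+2*j)+2 := by ring
    rw [e]
    calc (4:ℝ)^(j+1) * (k.choose (k/2) : ℝ) * Real.sqrt (k : ℝ)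
        = 4 * ((4:ℝ)^j * (k.choose (k/2) : ℝ) * Real.sqrt (k:ℝ)) := by ring
      _ ≤ 4 * (((k+2*j).choose ((k+2*j)/2) : ℝ) * Real.sqrt ((k+2*j:ℕ):ℝ)) := by
          have h4 : (0:ℝ) ≤ 4 := by norm_num
          nlinarith [ih]
      _ = 4 * ((k+2*j).choose ((k+2*j)/2) : ℝ) * Real.sqrt ((k+2*j:ℕ):ℝ) := by ring
      _ ≤ _ := h2

set_option maxHeartbeats 800000 in
/-- For `1 ≤ m ≤ n - 1`, the central binomial coefficient satisfies
`C(n-m, ⌊(n-m)/2⌋) ≤ (n/(n-1)) · √(n/(n-m)) · 2^{-m} · C(n, ⌊n/2⌋)`. -/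
theorem stmt_11 (n m : ℕ) (h1 : 1 ≤ m) (h2 : m ≤ n - 1) :
    (((n - m).choose ((n - m) / 2) : ℕ) : ℝ) ≤
      ((n : ℝ) / ((n : ℝ) - 1)) * Real.sqrt ((n : ℝ) / ((n : ℝ) - (m : ℝ))) *
        (2 : ℝ) ^ (-(m : ℝ)) * ((n.choose (n / 2) : ℕ) : ℝ) := by
  have hn2 : 2 ≤ n := by omega
  set r : ℕ := n - m with hr
  have hr1 : 1 ≤ r := by omega
  have hnrm : n = r + m := by omega
  set N : ℝ := (n : ℝ) with hN
  set R : ℝ := (r : ℝ) with hR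
  have hN2 : (2:ℝ) ≤ N := by rw [hN]; exact_mod_cast hn2
  have hR1 : (1:ℝ) ≤ R := by rw [hR]; exact_mod_cast hr1
  have hcast : N - (m:ℝ) = R := by
    rw [hN, hR, hnrm]; push_cast; ring
  rw [hcast]
  have hrpow : (2:ℝ) ^ (-(m:ℝ)) = ((2:ℝ)^(m:ℕ))⁻¹ := by
    rw [← Real.rpow_natCast 2 m, ← Real.rpow_neg (by norm_num)]
  rw [hrpow]
  have hsd : Real.sqrt (N / R) = Real.sqrt N / Real.sqrt R := Real.sqrt_div (by positivity) R
  rw [hsd]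
  set Cn : ℝ := (n.choose (n/2) : ℝ) with hCn
  set Cr : ℝ := (r.choose (r/2) : ℝ) with hCr
  have hCn0 : 0 ≤ Cn := Nat.cast_nonneg _
  have hCr0 : 0 ≤ Cr := Nat.cast_nonneg _
  have hsR : 0 < Real.sqrt R := Real.sqrt_pos.mpr (by linarith)
  have hsN : 0 < Real.sqrt N := Real.sqrt_pos.mpr (by linarith)
  have hN1 : (0:ℝ) < N - 1 := by linarith
  have heq : N / (N-1) * (Real.sqrt N / Real.sqrt R) * ((2:ℝ)^(m:ℕ))⁻¹ * Cn
      = (N * Real.sqrt N * Cn) / ((N-1) * Real.sqrt R * (2:ℝ)^(m:ℕ)) := by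
    field_simp
  rw [heq, le_div_iff₀ (by positivity)]
  -- main inequality: Cr * ((N-1) * √R * 2^m) ≤ N * √N * Cn
  rcases Nat.even_or_odd m with ⟨j, hm⟩ | ⟨j, hm⟩
  · -- m = j + j
    have hm' : m = 2*j := by omega
    have hiter := Riter j r
    have hidx : r + 2*j = n := by omega
    rw [hidx] at hiter
    have hpow : (2:ℝ)^(m:ℕ) = (4:ℝ)^j := by
      rw [hm', pow_mul]; norm_num
    calc Cr * ((N-1) * Real.sqrt R * (2:ℝ)^(m:ℕ))
        = (N-1) * ((4:ℝ)^j * Cr * Real.sqrt R) := by rw [hpow]; ring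
      _ ≤ (N-1) * (Cn * Real.sqrt N) := by
          apply mul_le_mul_of_nonneg_left _ (le_of_lt hN1)
          exact hiter
      _ ≤ N * Real.sqrt N * Cn := by nlinarith [mul_nonneg hCn0 hsN.le]
  · -- m = 2j+1
    have p : ℕ := n - 1
    have hiter := Riter j r
    have hidx : r + 2*j = n - 1 := by omega
    rw [hidx] at hiter
    set Cp : ℝ := ((n-1).choose ((n-1)/2) : ℝ) with hCp
    have hCp0 : 0 ≤ Cp := Nat.cast_nonneg _
    have hPcast : ((n-1 : ℕ) : ℝ) = N - 1 := by
      rw [hN]; push_cast [Nat.cast_sub (by omega : 1 ≤ n)]; ring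
    rw [hPcast] at hiter
    -- one step at top
    have hstep : 2 * N * Cp ≤ (N + 1) * Cn := by
      have h := nat1 (n-1)
      have e1 : n - 1 + 1 = n := by omega
      have e2 : n - 1 + 2 = n + 1 := by omega
      rw [e1, e2] at h
      have hc := (Nat.cast_le (α := ℝ)).mpr h
      push_cast at hc
      rw [hN, hCp, hCn]
      linarith [hc]
    -- sqrt inequality: (N²-1)√(N-1) ≤ N²√N
    have hsqrt : (N^2 - 1) * Real.sqrt (N-1) ≤ N^2 * Real.sqrt N := by
      apply sqrt_helper (by nlinarith) (by positivity)
      have hx1 : (0:ℝ) ≤ N^2 * (N-1) := by nlinarith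
      have hx2 : (0:ℝ) ≤ N * (N^3 - 1) := by nlinarith
      nlinarith [hx1, hx2]
    have hm2 : (2:ℝ)^(m:ℕ) = 2 * (4:ℝ)^j := by
      have : m = 2*j+1 := by omega
      rw [this, pow_succ, pow_mul]; norm_num; ring
    apply le_of_mul_le_mul_left _ (show (0:ℝ) < N by linarith)
    calc N * (Cr * ((N-1) * Real.sqrt R * (2:ℝ)^(m:ℕ)))
        = (2*N*(N-1)) * ((4:ℝ)^j * Cr * Real.sqrt R) := by rw [hm2]; ring
      _ ≤ (2*N*(N-1)) * (Cp * Real.sqrt (N-1)) := by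
          apply mul_le_mul_of_nonneg_left hiter (by nlinarith)
      _ = ((N-1) * Real.sqrt (N-1)) * (2 * N * Cp) := by ring
      _ ≤ ((N-1) * Real.sqrt (N-1)) * ((N+1) * Cn) := by
          apply mul_le_mul_of_nonneg_left hstep
          positivity
      _ = ((N^2-1) * Real.sqrt (N-1)) * Cn := by ring
      _ ≤ (N^2 * Real.sqrt N) * Cn := mul_le_mul_of_nonneg_right hsqrt hCn0
      _ = N * (N * Real.sqrt N * Cn) := by ring
end

section
/- The central binomial coefficient satisfies √(2/π) · (2^n/√n) · (1 - 1/n) ≤ C(n, ⌊n/2⌋) ≤ √(2/π) · (2^n/√n) for all n ≥ 1. -/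
/-!
Wallis' partial products satisfy `W m = 16 ^ m / ((2 m + 1) C(2m, m) ^ 2)` and, by comparing
integrals of powers of `sin`, `(2m + 1) / (2m + 2) · π / 2 ≤ W m ≤ π / 2`. Hence
`π m C(2m, m) ^ 2 ≤ 16 ^ m ≤ π (2m + 1) C(2m, m) ^ 2 / 2`. Since `C(2m + 1, m) = C(2m + 2, m + 1) / 2`,
this gives `π n C ^ 2 ≤ 2 · 4 ^ n ≤ π (n + 2) C ^ 2` for `C = C(n, ⌊n/2⌋)` and every `n`; taking
square roots, and using `(n + 2)(n - 1) ^ 2 ≤ n ^ 3`, yields both bounds.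
-/

open Real Nat

theorem four_pow_two_mul {R : Type*} [Semiring R] (m : ℕ) : (4 : R) ^ (2 * m) = 16 ^ m := by
  rw [pow_mul]; norm_num

theorem four_pow_two_mul_add_one {R : Type*} [Semiring R] (m : ℕ) :
    (4 : R) ^ (2 * m + 1) = 16 ^ m * 4 := by
  rw [pow_succ, four_pow_two_mul]

theorem Real.Wallis.W_eq_sixteen_pow_div_centralBinom_sq (m : ℕ) :
    Wallis.W m = 16 ^ m / ((2 * m + 1) * (centralBinom m : ℝ) ^ 2) := by
  have hfac : (centralBinom m : ℝ) * m ! * m ! = (2 * m)! := by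
    have h := choose_mul_factorial_mul_factorial (show m ≤ 2 * m by omega)
    rw [show 2 * m - m = m by omega] at h
    exact_mod_cast h
  have : (m ! : ℝ) ≠ 0 := by positivity
  rw [Wallis.W_eq_factorial_ratio, ← hfac, pow_mul]
  field_simp
  norm_num

namespace Nat

theorem two_mul_sixteen_pow_le_pi_mul_centralBinom_sq (m : ℕ) :
    2 * 16 ^ m ≤ π * (2 * m + 1) * (centralBinom m : ℝ) ^ 2 := by
  have h := Wallis.W_le m
  have : (0 : ℝ) < centralBinom m := by exact_mod_cast centralBinom_pos m
  rw [Wallis.W_eq_sixteen_pow_div_centralBinom_sq, div_le_iff₀ (by positivity)] at h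
  linarith

theorem pi_mul_mul_centralBinom_sq_le_sixteen_pow (m : ℕ) :
    π * m * (centralBinom m : ℝ) ^ 2 ≤ 16 ^ m := by
  have h := Wallis.le_W m
  have : (0 : ℝ) < centralBinom m := by exact_mod_cast centralBinom_pos m
  rw [Wallis.W_eq_sixteen_pow_div_centralBinom_sq, le_div_iff₀ (by positivity)] at h
  have hm : (4 * m + 4) * (m : ℝ) ≤ (2 * m + 1) ^ 2 := by nlinarith
  field_simp at h
  nlinarith [mul_le_mul_of_nonneg_right hm (by positivity : 0 ≤ π * (centralBinom m : ℝ) ^ 2)]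

theorem two_mul_choose_two_mul_add_one (m : ℕ) :
    2 * (2 * m + 1).choose m = centralBinom (m + 1) := by
  rw [centralBinom, show 2 * (m + 1) = 2 * m + 1 + 1 by ring, choose_succ_succ,
    choose_symm_half]
  ring

theorem pi_mul_mul_choose_half_sq_le_two_mul_four_pow (n : ℕ) :
    π * n * (n.choose (n / 2) : ℝ) ^ 2 ≤ 2 * 4 ^ n := by
  obtain ⟨m, rfl | rfl⟩ := n.even_or_odd'
  · have h := pi_mul_mul_centralBinom_sq_le_sixteen_pow m
    rw [show 2 * m / 2 = m by omega, ← centralBinom, four_pow_two_mul]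
    push_cast
    linarith
  · have h := pi_mul_mul_centralBinom_sq_le_sixteen_pow (m + 1)
    rw [← two_mul_choose_two_mul_add_one, pow_succ (16 : ℝ)] at h
    rw [show (2 * m + 1) / 2 = m by omega, four_pow_two_mul_add_one]
    have : 0 ≤ π * ((2 * m + 1).choose m : ℝ) ^ 2 := by positivity
    push_cast at h ⊢
    nlinarith

theorem two_mul_four_pow_le_pi_mul_add_two_mul_choose_half_sq (n : ℕ) :
    2 * 4 ^ n ≤ π * (n + 2) * (n.choose (n / 2) : ℝ) ^ 2 := by
  obtain ⟨m, rfl | rfl⟩ := n.even_or_odd'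
  · have h := two_mul_sixteen_pow_le_pi_mul_centralBinom_sq m
    rw [show 2 * m / 2 = m by omega, ← centralBinom, four_pow_two_mul]
    have : 0 ≤ π * (centralBinom m : ℝ) ^ 2 := by positivity
    push_cast
    nlinarith
  · have h := two_mul_sixteen_pow_le_pi_mul_centralBinom_sq (m + 1)
    rw [← two_mul_choose_two_mul_add_one, pow_succ (16 : ℝ)] at h
    rw [show (2 * m + 1) / 2 = m by omega, four_pow_two_mul_add_one]
    push_cast at h ⊢
    nlinarith

end Nat

theorem sqrt_two_div_pi_mul_two_pow_div_sqrt (n : ℕ) :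
    √(2 / π) * (2 ^ n / √n) = √(2 * 4 ^ n / (π * n)) := by
  have h4 : (4 : ℝ) ^ n = (2 ^ n) ^ 2 := by rw [← pow_mul, mul_comm, pow_mul]; norm_num
  rw [h4, show (2 : ℝ) * (2 ^ n) ^ 2 / (π * n) = 2 / π * (2 ^ n) ^ 2 / n by ring,
    sqrt_div' _ (Nat.cast_nonneg n), sqrt_mul' _ (by positivity), sqrt_sq (by positivity),
    mul_div_assoc]

/-- Stirling-type bounds for the central binomial coefficient: for all `n ≥ 1`,
`√(2/π) · (2^n/√n) · (1 - 1/n) ≤ C(n, ⌊n/2⌋) ≤ √(2/π) · (2^n/√n)`. -/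
theorem stmt_12 (n : ℕ) (hn : 1 ≤ n) :
    Real.sqrt (2 / Real.pi) * ((2 : ℝ) ^ n / Real.sqrt n) * (1 - 1 / (n : ℝ)) ≤
        ((n.choose (n / 2) : ℕ) : ℝ) ∧
      ((n.choose (n / 2) : ℕ) : ℝ) ≤ Real.sqrt (2 / Real.pi) * ((2 : ℝ) ^ n / Real.sqrt n) := by
  have hn' : (1 : ℝ) ≤ n := by exact_mod_cast hn
  set C : ℝ := ((n.choose (n / 2) : ℕ) : ℝ)
  have hC : 0 ≤ C := Nat.cast_nonneg _
  have hlower := two_mul_four_pow_le_pi_mul_add_two_mul_choose_half_sq n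
  rw [sqrt_two_div_pi_mul_two_pow_div_sqrt]
  constructor
  · have h1 : 0 ≤ 1 - 1 / (n : ℝ) := by rw [sub_nonneg, div_le_one (by positivity)]; exact hn'
    rw [← sqrt_sq h1, ← sqrt_mul (by positivity), sqrt_le_left hC, div_mul_eq_mul_div,
      div_le_iff₀ (by positivity)]
    have hcube : (n + 2) * (n - 1) ^ 2 ≤ (n : ℝ) ^ 3 := by nlinarith
    calc 2 * 4 ^ n * (1 - 1 / (n : ℝ)) ^ 2 = 2 * 4 ^ n * (n - 1) ^ 2 / n ^ 2 := by field_simp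
      _ ≤ π * (n + 2) * C ^ 2 * (n - 1) ^ 2 / n ^ 2 := by gcongr
      _ = π * C ^ 2 * ((n + 2) * (n - 1) ^ 2) / n ^ 2 := by ring
      _ ≤ π * C ^ 2 * n ^ 3 / n ^ 2 := by gcongr
      _ = C ^ 2 * (π * n) := by field_simp
  · rw [le_sqrt hC (by positivity), le_div_iff₀ (by positivity)]
    linarith [pi_mul_mul_choose_half_sq_le_two_mul_four_pow n]
end

section
/- A matroid M on ground set E with automorphism (e f) (transposition of two elements e ≠ f), such that {e,f} is both independent and coindependent in M, is uniquely determined by the two minors M\{e,f} (deletion) and M/{e,f} (contraction): if M and M' are two such matroids of the same rank with M\ef = M'\ef and M/ef = M'/ef, then M = M'. -/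
/-- Deletion of a set of elements from a matroid. -/
def Matroid.del {α : Type*} (M : Matroid α) (D : Set α) : Matroid α :=
  M.restrict (M.E \ D)

/-- Contraction of a set of elements in a matroid, defined via duality. -/
def Matroid.con {α : Type*} (M : Matroid α) (C : Set α) : Matroid α :=
  (M.dual.del C).dual

/-! The bases of `M` avoiding `{e, f}` are the bases of `M ＼ {e, f}`, and those containing
`{e, f}` are, after removing `e` and `f`, the bases of `M ／ {e, f}`. If a basis `B` contains
exactly one of `e`, `f`, then `X = B \ {e, f}` is independent in `M ＼ {e, f}`, spans
`M ／ {e, f}`, and is a basis of neither. Conversely such an `X` extends to a basis inside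
`X ∪ {e, f}`, which adds exactly one of `e`, `f` because no basis contains another; since
`(e f)` is an automorphism, both `X ∪ {e}` and `X ∪ {f}` are then bases. So the bases of `M`
are determined by the two minors. -/

open Set

namespace Matroid

variable {α : Type*} {M : Matroid α} {B C D : Set α}

lemma del_eq_delete (M : Matroid α) (D : Set α) : M.del D = M ＼ D := rfl

lemma con_eq_contract (M : Matroid α) (C : Set α) : M.con C = M ／ C := rfl

lemma Coindep.isBase_iff_delete_isBase (hD : M.Coindep D) (hBD : Disjoint B D) :
    M.IsBase B ↔ (M ＼ D).IsBase B := by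
  rw [hD.delete_isBase_iff, and_iff_left hBD]

lemma Indep.isBase_iff_contract_isBase_diff (hC : M.Indep C) (hCB : C ⊆ B) :
    M.IsBase B ↔ (M ／ C).IsBase (B \ C) := by
  rw [hC.contract_isBase_iff, sdiff_union_of_subset hCB, and_iff_left disjoint_sdiff_left]

lemma ground_eq_of_delete_eq {M' : Matroid α} (hD : D ⊆ M.E) (hD' : D ⊆ M'.E)
    (h : M ＼ D = M' ＼ D) : M.E = M'.E := by
  have hE : M.E \ D = M'.E \ D := congrArg Matroid.E h
  rw [← sdiff_union_of_subset hD, ← sdiff_union_of_subset hD', hE]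

lemma isBase_iff_of_swap_of_mem_of_notMem [DecidableEq α] {e f : α}
    (haut : ∀ B : Set α, M.IsBase B ↔ M.IsBase (Equiv.swap e f '' B))
    (hind : M.Indep {e, f}) (hcoind : M.Coindep {e, f}) (he : e ∈ B) (hf : f ∉ B) :
    M.IsBase B ↔ (M ＼ {e, f}).Indep (B \ {e, f}) ∧ (M ／ {e, f}).Spanning (B \ {e, f}) ∧
      ¬ (M ＼ {e, f}).IsBase (B \ {e, f}) ∧ ¬ (M ／ {e, f}).IsBase (B \ {e, f}) := by
  set X := B \ {e, f}
  have hXef : Disjoint X {e, f} := disjoint_sdiff_left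
  rw [delete_indep_iff, contract_spanning_iff hind.subset_ground,
    ← hcoind.isBase_iff_delete_isBase hXef, hind.contract_isBase_iff, and_iff_left hXef,
    and_iff_left hXef, and_iff_left hXef]
  constructor
  · intro hB
    have hBXef : B ⊆ X ∪ {e, f} := subset_sdiff_union B {e, f}
    refine ⟨hB.indep.subset sdiff_subset, hB.spanning.superset hBXef
      (union_subset (sdiff_subset.trans hB.subset_ground) hind.subset_ground),
      fun hXb => ?_, fun hXefb => ?_⟩
    · have : X = B := hXb.eq_of_subset_isBase hB sdiff_subset
      exact (this ▸ he).2 (mem_insert e {f})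
    · have : B = X ∪ {e, f} := hB.eq_of_subset_isBase hXefb hBXef
      exact hf (this ▸ Or.inr (mem_insert_of_mem e rfl))
  · rintro ⟨hXi, hsp, hnX, hnXef⟩
    obtain ⟨B₀, hB₀, hXB₀, hB₀Xef⟩ := hXi.exists_isBase_subset_spanning hsp subset_union_left
    have hmem : ∀ x, x ∈ B₀ ↔ x ∈ X ∨ x = e ∧ e ∈ B₀ ∨ x = f ∧ f ∈ B₀ := fun x => by
      have := @hXB₀ x
      have := @hB₀Xef x
      grind
    by_cases he₀ : e ∈ B₀ <;> by_cases hf₀ : f ∈ B₀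
    · refine absurd ?_ hnXef
      convert hB₀ using 1
      ext x
      grind
    · convert hB₀ using 1
      ext x
      grind
    · convert (haut B₀).1 hB₀ using 1
      rw [Equiv.swap_comm, Equiv.image_swap_of_mem_of_notMem hf₀ he₀]
      ext x
      grind
    · refine absurd ?_ hnX
      convert hB₀ using 1
      ext x
      grind

end Matroid

theorem stmt_17_general {α : Type*} [DecidableEq α] (M M' : Matroid α)
    (e f : α)
    (haut : ∀ B : Set α, M.IsBase B ↔ M.IsBase ((Equiv.swap e f) '' B))
    (haut' : ∀ B : Set α, M'.IsBase B ↔ M'.IsBase ((Equiv.swap e f) '' B))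
    (hind : M.Indep {e, f}) (hcoind : M.Coindep {e, f})
    (hind' : M'.Indep {e, f}) (hcoind' : M'.Coindep {e, f})
    (hdel : M.del {e, f} = M'.del {e, f}) (hcon : M.con {e, f} = M'.con {e, f}) :
    M = M' := by
  rw [Matroid.del_eq_delete, Matroid.del_eq_delete] at hdel
  rw [Matroid.con_eq_contract, Matroid.con_eq_contract] at hcon
  have hmixed : ∀ B, e ∈ B → f ∉ B → (M.IsBase B ↔ M'.IsBase B) := fun B he hf => by
    rw [Matroid.isBase_iff_of_swap_of_mem_of_notMem haut hind hcoind he hf,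
      Matroid.isBase_iff_of_swap_of_mem_of_notMem haut' hind' hcoind' he hf,
      hdel, hcon]
  have hE : M.E = M'.E :=
    Matroid.ground_eq_of_delete_eq hind.subset_ground hind'.subset_ground hdel
  refine Matroid.ext_isBase hE fun B _ => ?_
  by_cases he : e ∈ B <;> by_cases hf : f ∈ B
  · rw [hind.isBase_iff_contract_isBase_diff (pair_subset he hf),
      hind'.isBase_iff_contract_isBase_diff (pair_subset he hf), hcon]
  · exact hmixed B he hf
  · rw [haut, haut']
    exact hmixed _ (by simpa using hf) (by simpa using he)
  · have hBef : Disjoint B {e, f} := by simp [he, hf]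
    rw [hcoind.isBase_iff_delete_isBase hBef, hcoind'.isBase_iff_delete_isBase hBef, hdel]

/-- A finite matroid `M` having the transposition `(e f)` as an automorphism, with `{e,f}`
independent and coindependent, is uniquely determined by its rank together with the
deletion `M \ {e,f}` and the contraction `M / {e,f}`. -/
theorem stmt_17 {α : Type*} [DecidableEq α] (M M' : Matroid α) [M.Finite] [M'.Finite]
    (e f : α) (hef : e ≠ f)
    (haut : ∀ B : Set α, M.IsBase B ↔ M.IsBase ((Equiv.swap e f) '' B))
    (haut' : ∀ B : Set α, M'.IsBase B ↔ M'.IsBase ((Equiv.swap e f) '' B))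
    (hind : M.Indep {e, f}) (hcoind : M.Coindep {e, f})
    (hind' : M'.Indep {e, f}) (hcoind' : M'.Coindep {e, f})
    (r : ℕ) (hrank : ∀ B, M.IsBase B → B.ncard = r) (hrank' : ∀ B, M'.IsBase B → B.ncard = r)
    (hdel : M.del {e, f} = M'.del {e, f}) (hcon : M.con {e, f} = M'.con {e, f}) :
    M = M' :=
  stmt_17_general M M' e f haut haut' hind hcoind hind' hcoind' hdel hcon
end
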